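/- For every x with |x| ≤ d and every λ ≠ 0, the function h_{d,λ}(x) = -(λx·cosh(λd) - sinh(λx))/(λd·cosh(λd) - sinh(λd)) satisfies |h_{d,λ}(x)| ≤ 1; equivalently, h_{d,λ} maps [-d,d] into [-1,1]. -/

import Mathlib

/-!
Put `a = λd` and `φ(u) = u cosh a - sinh u`, so that `h(x) = -φ(λx) / φ(a)`.
Since `φ' (u) = cosh a - cosh u`, `φ` is strictly increasing on `[-|a|, |a|]`; being odd,
it is therefore bounded in absolute value there by `φ(|a|) = |φ(a)|`, which is positive
because `φ(0) = 0`. As `|λx| ≤ |a|`, this gives `|h(x)| ≤ 1`.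
-/

open Real Set

lemma strictMonoOn_mul_cosh_sub_sinh (a : ℝ) :
    StrictMonoOn (fun u => u * cosh a - sinh u) (Icc (-|a|) |a|) := by
  have hφ (u : ℝ) : HasDerivAt (fun u => u * cosh a - sinh u) (1 * cosh a - cosh u) u :=
    ((hasDerivAt_id u).mul_const _).sub (hasDerivAt_sinh u)
  refine strictMonoOn_of_deriv_pos (convex_Icc _ _)
    (fun u _ => (hφ u).continuousAt.continuousWithinAt) fun u hu => ?_
  rw [interior_Icc] at hu
  have hcosh : cosh u < cosh a := cosh_lt_cosh.2 (abs_lt.2 hu)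
  rw [(hφ u).deriv]
  linarith

lemma abs_mul_cosh_sub_sinh_eq (a : ℝ) :
    |a * cosh a - sinh a| = |a| * cosh a - sinh |a| := by
  have hnonneg : 0 ≤ |a| * cosh a - sinh |a| := by
    simpa using (strictMonoOn_mul_cosh_sub_sinh a).monotoneOn
      ⟨neg_nonpos.2 (abs_nonneg a), abs_nonneg a⟩ ⟨by linarith [abs_nonneg a], le_rfl⟩
      (abs_nonneg a)
  rcases abs_choice a with ha | ha <;> rw [ha] at hnonneg ⊢
  · exact abs_of_nonneg hnonneg
  · rw [sinh_neg] at hnonneg ⊢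
    rw [abs_of_nonpos (by linarith)]
    ring

lemma mul_cosh_sub_sinh_ne_zero {a : ℝ} (ha : a ≠ 0) : a * cosh a - sinh a ≠ 0 := by
  have hpos : 0 < |a| * cosh a - sinh |a| := by
    simpa using strictMonoOn_mul_cosh_sub_sinh a
      ⟨neg_nonpos.2 (abs_nonneg a), abs_nonneg a⟩ ⟨by linarith [abs_nonneg a], le_rfl⟩ (abs_pos.2 ha)
  rw [← abs_mul_cosh_sub_sinh_eq] at hpos
  exact abs_pos.1 hpos

lemma abs_mul_cosh_sub_sinh_le {a u : ℝ} (hu : |u| ≤ |a|) :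
    |u * cosh a - sinh u| ≤ |a * cosh a - sinh a| := by
  have hmono := (strictMonoOn_mul_cosh_sub_sinh a).monotoneOn
  have hmem : u ∈ Icc (-|a|) |a| := abs_le.1 hu
  have hupper : u * cosh a - sinh u ≤ |a| * cosh a - sinh |a| :=
    hmono hmem ⟨by linarith [abs_nonneg a], le_rfl⟩ hmem.2
  have hlower : -|a| * cosh a - sinh (-|a|) ≤ u * cosh a - sinh u :=
    hmono ⟨le_rfl, by linarith [abs_nonneg a]⟩ hmem hmem.1
  rw [sinh_neg] at hlower
  rw [abs_mul_cosh_sub_sinh_eq, abs_le]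
  constructor <;> linarith

theorem stmt_3 (d lam : ℝ) (hd : 0 < d) (hlam : lam ≠ 0)
    (h : ℝ → ℝ)
    (hdef : ∀ x, h x = -(lam * x * Real.cosh (lam * d) - Real.sinh (lam * x)) /
      (lam * d * Real.cosh (lam * d) - Real.sinh (lam * d))) :
    ∀ x : ℝ, |x| ≤ d → |h x| ≤ 1 := by
  intro x hx
  have hden := mul_cosh_sub_sinh_ne_zero (mul_ne_zero hlam hd.ne')
  have hscaled : |lam * x| ≤ |lam * d| := by
    rw [abs_mul, abs_mul, abs_of_pos hd]
    exact mul_le_mul_of_nonneg_left hx (abs_nonneg lam)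
  rw [hdef, abs_div, abs_neg, div_le_one (abs_pos.2 hden)]
  exact abs_mul_cosh_sub_sinh_le hscaled
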